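/- Fix τ ≥ 0 and let φ and Φ denote the probability density function and cumulative distribution function of the standard normal distribution N(0,1). Define, for p ∈ ℝ and σ ≥ 0, the expected-improvement acquisition g(p, σ) = σ·φ((p − τ)/σ) + (p − τ)·Φ((p − τ)/σ) if σ > 0, and g(p, σ) = max{p − τ, 0} if σ = 0. Then: (1) for all real sequences (p_n) and nonnegative sequences (σ_n), if limsup_n p_n ≤ 0 and σ_n → 0 then g(p_n, σ_n) → 0; and (2) if liminf_n p_n > −∞ and liminf_n σ_n > 0 then liminf_n g(p_n, σ_n) > 0. -/

import Mathlib

open Filter Metric Topology MeasureTheory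
open scoped Classical

/-- The probability density function of the standard normal distribution. -/
noncomputable def stdPdf (t : ℝ) : ℝ :=
  (Real.sqrt (2 * Real.pi))⁻¹ * Real.exp (-(t ^ 2) / 2)

/-- The cumulative distribution function of the standard normal distribution. -/
noncomputable def stdCdf (t : ℝ) : ℝ := ∫ s in Set.Iic t, stdPdf s

/-- Expected-improvement acquisition with tolerance `τ`. -/
noncomputable def eiAcq (τ p σ : ℝ) : ℝ :=
  if 0 < σ then σ * stdPdf ((p - τ) / σ) + (p - τ) * stdCdf ((p - τ) / σ)
  else max (p - τ) 0


lemma stdPdf_pos (t : ℝ) : 0 < stdPdf t := by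
  unfold stdPdf; positivity

lemma stdPdf_le (t : ℝ) : stdPdf t ≤ (Real.sqrt (2 * Real.pi))⁻¹ := by
  unfold stdPdf
  nth_rewrite 2 [← mul_one ((Real.sqrt (2 * Real.pi))⁻¹)]
  gcongr
  rw [Real.exp_le_one_iff]
  nlinarith [sq_nonneg t]

lemma continuous_stdPdf : Continuous stdPdf := by
  unfold stdPdf; fun_prop

lemma stdPdf_eq (t : ℝ) : stdPdf t = (Real.sqrt (2 * Real.pi))⁻¹ * Real.exp (-(1/2 : ℝ) * t ^ 2) := by
  unfold stdPdf; congr 1; ring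

lemma integrable_stdPdf : Integrable stdPdf := by
  have : stdPdf = fun t => (Real.sqrt (2 * Real.pi))⁻¹ * Real.exp (-(1/2 : ℝ) * t ^ 2) := by
    funext t; exact stdPdf_eq t
  rw [this]
  exact (integrable_exp_neg_mul_sq (by norm_num)).const_mul _

lemma integrable_mul_stdPdf : Integrable (fun s => s * stdPdf s) := by
  have : (fun s => s * stdPdf s)
      = fun s => (Real.sqrt (2 * Real.pi))⁻¹ * (s * Real.exp (-(1/2 : ℝ) * s ^ 2)) := by
    funext s; rw [stdPdf_eq]; ring
  rw [this]
  exact (integrable_mul_exp_neg_mul_sq (by norm_num)).const_mul _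

lemma hasDerivAt_stdPdf (x : ℝ) : HasDerivAt stdPdf (-x * stdPdf x) x := by
  have h1 : HasDerivAt (fun t : ℝ => -(t ^ 2) / 2) (-x) x := by
    have := ((hasDerivAt_pow 2 x).neg.div_const 2)
    refine this.congr_deriv ?_; push_cast; ring
  have := (h1.exp).const_mul (Real.sqrt (2 * Real.pi))⁻¹
  refine this.congr_deriv ?_
  unfold stdPdf; ring

lemma tendsto_stdPdf_atBot : Tendsto stdPdf atBot (𝓝 0) := by
  have h0 : Tendsto (fun t : ℝ => t ^ 2) atBot atTop := by
    have h := (tendsto_pow_atTop (n := 2) two_ne_zero).comp (tendsto_neg_atBot_atTop (G := ℝ))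
    refine h.congr fun t => ?_
    simp [Function.comp]
  have h1 : Tendsto (fun t : ℝ => -(t ^ 2) / 2) atBot atBot := by
    have h2 := h0.atTop_div_const (by norm_num : (0:ℝ) < 2)
    have h3 := (tendsto_neg_atTop_atBot (G := ℝ)).comp h2
    refine h3.congr fun t => ?_
    simp [Function.comp, neg_div]
  have h3 : Tendsto (fun t : ℝ => Real.exp (-(t ^ 2) / 2)) atBot (𝓝 0) :=
    Real.tendsto_exp_atBot.comp h1
  have h4 := h3.const_mul (Real.sqrt (2 * Real.pi))⁻¹
  rw [mul_zero] at h4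
  exact h4.congr fun t => rfl

lemma integral_neg_mul_stdPdf (u : ℝ) : ∫ s in Set.Iic u, (-s * stdPdf s) = stdPdf u := by
  have hint : MeasureTheory.Integrable (fun s : ℝ => -s * stdPdf s) := by
    have := integrable_mul_stdPdf.neg
    exact this.congr (by filter_upwards with s; simp)
  have := MeasureTheory.integral_Iic_of_hasDerivAt_of_tendsto'
    (f := stdPdf) (f' := fun s => -s * stdPdf s) (a := u)
    (fun x _ => hasDerivAt_stdPdf x) hint.integrableOn tendsto_stdPdf_atBot
  simpa using this

lemma stdCdf_nonneg (u : ℝ) : 0 ≤ stdCdf u :=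
  MeasureTheory.setIntegral_nonneg measurableSet_Iic fun t _ => (stdPdf_pos t).le

lemma stdCdf_mono {u v : ℝ} (h : u ≤ v) : stdCdf u ≤ stdCdf v := by
  apply MeasureTheory.setIntegral_mono_set integrable_stdPdf.integrableOn
  · filter_upwards with t using (stdPdf_pos t).le
  · exact HasSubset.Subset.eventuallyLE (Set.Iic_subset_Iic.2 h)

lemma integral_stdPdf : ∫ s, stdPdf s = 1 := by
  have : ∫ s, stdPdf s = (Real.sqrt (2 * Real.pi))⁻¹ * ∫ s : ℝ, Real.exp (-(1/2 : ℝ) * s ^ 2) := by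
    rw [← MeasureTheory.integral_const_mul]
    congr 1; funext s; exact stdPdf_eq s
  rw [this, integral_gaussian]
  rw [show Real.pi / (1/2 : ℝ) = 2 * Real.pi by ring]
  rw [inv_mul_cancel₀]
  positivity

lemma stdCdf_le_one (u : ℝ) : stdCdf u ≤ 1 := by
  rw [← integral_stdPdf]
  exact MeasureTheory.setIntegral_le_integral integrable_stdPdf
    (by filter_upwards with t using (stdPdf_pos t).le)

lemma stdCdf_zero : stdCdf 0 = 1/2 := by
  have hsymm : ∫ s in Set.Iic (0:ℝ), stdPdf s = ∫ s in Set.Ioi (0:ℝ), stdPdf s := by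
    rw [show Set.Ioi (0:ℝ) = Set.Ioi (-(0:ℝ)) by norm_num, ← integral_comp_neg_Iic]
    congr 1; funext s; unfold stdPdf; congr 2; ring
  have hsplit : stdCdf 0 + ∫ s in Set.Ioi (0:ℝ), stdPdf s = 1 := by
    rw [← integral_stdPdf]
    exact intervalIntegral.integral_Iic_add_Ioi (b := (0:ℝ))
      integrable_stdPdf.integrableOn integrable_stdPdf.integrableOn
  have : stdCdf 0 = ∫ s in Set.Ioi (0:ℝ), stdPdf s := by
    unfold stdCdf; rw [hsymm]
  linarith

lemma integrable_sub_mul_stdPdf (u : ℝ) : MeasureTheory.Integrable (fun s => (u - s) * stdPdf s) := by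
  have h1 := (integrable_stdPdf.const_mul u).sub integrable_mul_stdPdf
  exact h1.congr (by filter_upwards with s; simp only [Pi.sub_apply]; ring)

lemma mills {u : ℝ} (hu : u < 0) : -u * stdCdf u < stdPdf u := by
  have key : (0:ℝ) < ∫ s in Set.Iic u, (u - s) * stdPdf s := by
    have hsplit : ∫ s in Set.Iic u, (u - s) * stdPdf s
        = (∫ s in Set.Iic (u - 1), (u - s) * stdPdf s) + ∫ s in (u-1)..u, (u - s) * stdPdf s := by
      have hIS := intervalIntegral.integral_Iic_sub_Iic (f := fun s => (u - s) * stdPdf s)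
        (a := u - 1) (b := u) (μ := MeasureTheory.volume)
        (integrable_sub_mul_stdPdf u).integrableOn (integrable_sub_mul_stdPdf u).integrableOn
      linarith
    rw [hsplit]
    have h1 : (0:ℝ) ≤ ∫ s in Set.Iic (u - 1), (u - s) * stdPdf s := by
      apply MeasureTheory.setIntegral_nonneg measurableSet_Iic
      intro t ht
      have : t ≤ u - 1 := ht
      have := stdPdf_pos t
      nlinarith
    have h2 : (0:ℝ) < ∫ s in (u-1)..u, (u - s) * stdPdf s := by
      apply intervalIntegral.intervalIntegral_pos_of_pos_on
      · exact (integrable_sub_mul_stdPdf u).intervalIntegrable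
      · intro x hx
        have := stdPdf_pos x
        have := hx.2
        nlinarith
      · linarith
    linarith
  have hrw : ∫ s in Set.Iic u, (u - s) * stdPdf s
      = (∫ s in Set.Iic u, -s * stdPdf s) - (-u) * stdCdf u := by
    rw [show (-u) * stdCdf u = ∫ s in Set.Iic u, (-u) * stdPdf s by
        rw [MeasureTheory.integral_const_mul]; rfl]
    rw [← MeasureTheory.integral_sub (integrable_mul_stdPdf.neg.congr
        (by filter_upwards with s; simp)).integrableOn
      ((integrable_stdPdf.const_mul (-u)).integrableOn)]
    congr 1; funext s; ring
  rw [hrw, integral_neg_mul_stdPdf] at key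
  linarith

lemma hasDerivAt_stdCdf (x : ℝ) : HasDerivAt stdCdf (stdPdf x) x := by
  have heq : stdCdf = fun y => stdCdf 0 + ∫ t in (0:ℝ)..y, stdPdf t := by
    funext y
    have := intervalIntegral.integral_Iic_sub_Iic (f := stdPdf) (a := (0:ℝ)) (b := y)
      (μ := MeasureTheory.volume) integrable_stdPdf.integrableOn integrable_stdPdf.integrableOn
    unfold stdCdf; linarith
  rw [heq]
  have hd : HasDerivAt (fun y => ∫ t in (0:ℝ)..y, stdPdf t) (stdPdf x) x :=
    intervalIntegral.integral_hasDerivAt_right integrable_stdPdf.intervalIntegrable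
      (continuous_stdPdf.stronglyMeasurable.stronglyMeasurableAtFilter)
      continuous_stdPdf.continuousAt
  exact hd.const_add _

noncomputable def eiH (u : ℝ) : ℝ := stdPdf u + u * stdCdf u

lemma hasDerivAt_eiH (x : ℝ) : HasDerivAt eiH (stdCdf x) x := by
  have h := (hasDerivAt_stdPdf x).add ((hasDerivAt_id x).mul (hasDerivAt_stdCdf x))
  simp only [id_eq, one_mul] at h
  have e : -x * stdPdf x + (stdCdf x + x * stdPdf x) = stdCdf x := by ring
  rw [e] at h
  exact h

lemma eiH_mono : Monotone eiH := by
  have hdiff : Differentiable ℝ eiH := fun x => (hasDerivAt_eiH x).differentiableAt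
  apply monotone_of_deriv_nonneg hdiff
  intro x
  rw [(hasDerivAt_eiH x).deriv]
  exact stdCdf_nonneg x

lemma eiH_pos (u : ℝ) : 0 < eiH u := by
  rcases lt_trichotomy u 0 with h | h | h
  · have := mills h
    unfold eiH
    nlinarith
  · subst h
    unfold eiH
    simpa using stdPdf_pos 0
  · have h0 : 0 < eiH 0 := by unfold eiH; simpa using stdPdf_pos 0
    exact lt_of_lt_of_le h0 (eiH_mono h.le)

lemma eiAcq_eq (τ p σ : ℝ) (hσ : 0 < σ) : eiAcq τ p σ = σ * eiH ((p - τ) / σ) := by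
  unfold eiAcq eiH
  rw [if_pos hσ]
  field_simp

lemma eiAcq_nonneg (τ p σ : ℝ) (hσ : 0 ≤ σ) : 0 ≤ eiAcq τ p σ := by
  rcases hσ.eq_or_lt with h | h
  · unfold eiAcq; rw [if_neg (by rw [← h]; exact lt_irrefl 0)]; exact le_max_right _ _
  · rw [eiAcq_eq _ _ _ h]
    exact mul_nonneg h.le (eiH_pos _).le

lemma eiAcq_le (τ p σ : ℝ) (hσ : 0 ≤ σ) :
    eiAcq τ p σ ≤ σ * (Real.sqrt (2 * Real.pi))⁻¹ + max (p - τ) 0 := by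
  unfold eiAcq
  rcases hσ.eq_or_lt with h | h
  · rw [if_neg (by rw [← h]; exact lt_irrefl 0), ← h]
    simp
  · rw [if_pos h]
    set u := (p - τ) / σ
    have h1 : σ * stdPdf u ≤ σ * (Real.sqrt (2 * Real.pi))⁻¹ :=
      mul_le_mul_of_nonneg_left (stdPdf_le u) hσ
    have h2 : (p - τ) * stdCdf u ≤ max (p - τ) 0 := by
      nlinarith [stdCdf_nonneg u, stdCdf_le_one u, le_max_left (p - τ) 0, le_max_right (p - τ) 0]
    linarith


/-- Improvement property of the expected-improvement acquisition
function, for tolerance `τ ≥ 0`: it vanishes along sequences with no eventual improvement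
(`limsup p_n ≤ 0`) and vanishing uncertainty, and has positive liminf whenever
`liminf p_n > −∞` and `liminf σ_n > 0`. -/
theorem ei_improvement (τ : ℝ) (hτ : 0 ≤ τ) :
    (∀ p q : ℕ → ℝ, (∀ n, 0 ≤ q n) → (∀ ε > 0, ∀ᶠ n in atTop, p n ≤ ε) →
      Tendsto q atTop (𝓝 0) → Tendsto (fun n => eiAcq τ (p n) (q n)) atTop (𝓝 0)) ∧
    (∀ p q : ℕ → ℝ, (∀ n, 0 ≤ q n) → (∃ c, ∀ᶠ n in atTop, c ≤ p n) →
      (∃ c > 0, ∀ᶠ n in atTop, c ≤ q n) →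
      ∃ c > 0, ∀ᶠ n in atTop, c ≤ eiAcq τ (p n) (q n)) := by
  have hs : 0 < Real.sqrt (2 * Real.pi) := Real.sqrt_pos.2 (by positivity)
  constructor
  · intro p q hq0 hp hq
    rw [Metric.tendsto_nhds]
    intro ε hε
    have h1 := hp (ε/2) (by positivity)
    have h2 : ∀ᶠ n in atTop, q n < ε/2 * Real.sqrt (2 * Real.pi) :=
      hq.eventually_lt_const (by positivity)
    filter_upwards [h1, h2] with n hn1 hn2
    rw [Real.dist_eq, sub_zero, abs_of_nonneg (eiAcq_nonneg τ (p n) (q n) (hq0 n))]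
    have hb := eiAcq_le τ (p n) (q n) (hq0 n)
    have h3 : max (p n - τ) 0 ≤ ε/2 := max_le (by linarith) (by linarith)
    have h4 : q n * (Real.sqrt (2 * Real.pi))⁻¹ < ε/2 := by
      rw [← div_eq_mul_inv, div_lt_iff₀ hs]
      exact hn2
    linarith
  · rintro p q hq0 ⟨c, hc⟩ ⟨d, hd, hdq⟩
    set u₁ := min ((c - τ)/d) 0 with hu₁
    refine ⟨d * eiH u₁, mul_pos hd (eiH_pos u₁), ?_⟩
    filter_upwards [hc, hdq] with n h1 h2
    have hσ : 0 < q n := lt_of_lt_of_le hd h2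
    rw [eiAcq_eq _ _ _ hσ]
    have hu : u₁ ≤ (p n - τ) / q n := by
      rcases le_or_gt 0 (p n - τ) with h | h
      · exact le_trans (min_le_right _ _) (by positivity)
      · refine le_trans (min_le_left _ _) ?_
        rw [div_le_div_iff₀ hd hσ]
        nlinarith
    have h3 : eiH u₁ ≤ eiH ((p n - τ) / q n) := eiH_mono hu
    nlinarith [eiH_pos u₁]
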